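/- arXiv:1406.3449 — 2 statements merged into one kernel-verified Lean document; each statement's English description precedes it below -/
import Mathlib

section
/- Let f : Ω₁ → Ω₂ be a proper holomorphic map of degree m between bounded domains in ℂⁿ with complex Jacobian u = det[∂f_i/∂z_j]. Then for every measurable ψ : Ω₂ → ℂ, the function u·(ψ∘f) lies in L²(Ω₁) if and only if ψ ∈ L²(Ω₂), and in that case ‖u·(ψ∘f)‖²_{L²(Ω₁)} = m · ‖ψ‖²_{L²(Ω₂)}. -/
open MeasureTheory

/-- Partial derivative `∂/∂z_j` of a function of several complex variables. -/
noncomputable def pderivC {n : ℕ} (j : Fin n) (f : (Fin n → ℂ) → ℂ) :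
    (Fin n → ℂ) → ℂ :=
  fun z => deriv (fun w => f (Function.update z j w)) (z j)

/-- The complex Jacobian determinant `u = det [∂f_i/∂z_j]` of a holomorphic map. -/
noncomputable def jacDet {n : ℕ} (f : (Fin n → ℂ) → (Fin n → ℂ)) (z : Fin n → ℂ) : ℂ :=
  (Matrix.of fun i j : Fin n => pderivC j (fun w => f w i) z).det

/-!
Off the critical set `E` the real Jacobian `|u|²` of `f` does not vanish, and `f` is `C¹` (the
Cauchy estimates bound the oscillation of its derivative), so by the inverse function theorem
`f` is locally injective on `Ω₁ \ E`. Cutting `Ω₁ \ E` into countably many measurable pieces on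
which `f` is injective and summing the change of variables formula over the pieces gives
`∫_{Ω₁ \ E} |u|² g ∘ f = ∫ N g`, where `N(w)` counts the preimages of `w` in `Ω₁ \ E`.
Properness makes each fibre compact and discrete, hence finite, so `N = m` on `Ω₂ \ f(E)`.
As `E` and `f(E)` are null, `∫_{Ω₁} |u|² g ∘ f = m ∫_{Ω₂} g` for every measurable `g ≥ 0`;
take `g = |ψ|²`. Finally `m ≠ 0` because `Ω₂ \ f(E)` has positive measure.
-/

open Function Set Filter Topology Metric
open scoped ENNReal

section Holomorphic

variable {E F : Type*} [NormedAddCommGroup E] [NormedSpace ℂ E]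
  [NormedAddCommGroup F] [NormedSpace ℂ F] {f : E → F} {U : Set E}

theorem DifferentiableAt.hasDerivAt_comp_add_smul {z v : E} {t : ℂ}
    (hf : DifferentiableAt ℂ f (z + t • v)) :
    HasDerivAt (fun s : ℂ => f (z + s • v)) (fderiv ℂ f (z + t • v) v) t :=
  hf.hasFDerivAt.comp_hasDerivAt t (by simpa using ((hasDerivAt_id t).smul_const v).const_add z)

/-- Cauchy estimate for `s ↦ f (z + s • v) - f (p + s • v)` on the disc of radius `r`. -/
theorem norm_fderiv_apply_sub_le [CompleteSpace F] (hU : IsOpen U) (hf : DifferentiableOn ℂ f U)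
    {z p v : E} {r ε : ℝ} (hr : 0 < r) (hz : ∀ t : ℂ, ‖t‖ ≤ r → z + t • v ∈ U)
    (hp : ∀ t : ℂ, ‖t‖ ≤ r → p + t • v ∈ U)
    (hε : ∀ t : ℂ, ‖t‖ = r → ‖f (z + t • v) - f (p + t • v)‖ ≤ ε) :
    ‖fderiv ℂ f z v - fderiv ℂ f p v‖ ≤ ε / r := by
  have hline : ∀ q : E, (∀ t : ℂ, ‖t‖ ≤ r → q + t • v ∈ U) → ∀ t : ℂ, ‖t‖ ≤ r →
      HasDerivAt (fun s : ℂ => f (q + s • v)) (fderiv ℂ f (q + t • v) v) t :=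
    fun q hq t ht => (hf.differentiableAt (hU.mem_nhds (hq t ht))).hasDerivAt_comp_add_smul
  have hdiff : DiffContOnCl ℂ (fun t : ℂ => f (z + t • v) - f (p + t • v)) (ball 0 r) := by
    refine DifferentiableOn.diffContOnCl fun t ht => ?_
    rw [closure_ball 0 hr.ne', mem_closedBall_zero_iff] at ht
    exact ((hline z hz t ht).sub (hline p hp t ht)).differentiableAt.differentiableWithinAt
  have h0 : ‖(0 : ℂ)‖ ≤ r := by simpa using hr.le
  have hderiv := ((hline z hz 0 h0).sub (hline p hp 0 h0)).deriv
  simp only [zero_smul, add_zero] at hderiv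
  rw [← hderiv]
  exact Complex.norm_deriv_le_of_forall_mem_sphere_norm_le hr hdiff
    fun t ht => hε t (mem_sphere_zero_iff_norm.1 ht)

theorem DifferentiableOn.continuousOn_fderiv_of_isOpen [ProperSpace E] [CompleteSpace F]
    (hf : DifferentiableOn ℂ f U) (hU : IsOpen U) : ContinuousOn (fderiv ℂ f) U := by
  intro p hp
  refine (Metric.continuousAt_iff.2 fun ε hε => ?_).continuousWithinAt
  obtain ⟨R, hR, hRU⟩ := Metric.isOpen_iff.1 hU p hp
  set r := R / 3 with hr_def
  have hr : 0 < r := by positivity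
  have hBU : closedBall p (2 * r) ⊆ U :=
    (closedBall_subset_ball (by rw [hr_def]; linarith)).trans hRU
  have hline : ∀ q ∈ closedBall p r, ∀ v : E, ‖v‖ = 1 → ∀ t : ℂ, ‖t‖ ≤ r →
      q + t • v ∈ closedBall p (2 * r) := by
    intro q hq v hv t ht
    rw [mem_closedBall_iff_norm] at hq ⊢
    calc ‖q + t • v - p‖ ≤ ‖t • v‖ + ‖q - p‖ := by
          rw [add_sub_right_comm, add_comm]; exact norm_add_le _ _
      _ ≤ r + r := by rw [norm_smul, hv, mul_one]; exact add_le_add ht hq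
      _ = 2 * r := by ring
  obtain ⟨δ, hδ, hfδ⟩ := Metric.uniformContinuousOn_iff.1
    ((isCompact_closedBall p _).uniformContinuousOn_of_continuous (hf.continuousOn.mono hBU))
    (ε / 2 * r) (by positivity)
  refine ⟨min δ r, lt_min hδ hr, fun {z} hz => ?_⟩
  have hzp : z ∈ closedBall p r := mem_closedBall.2 (hz.le.trans (min_le_right _ _))
  have hpp : p ∈ closedBall p r := mem_closedBall_self hr.le
  rw [dist_eq_norm]
  refine lt_of_le_of_lt (ContinuousLinearMap.opNorm_le_of_unit_norm (by positivity)
    fun v hv => ?_) (half_lt_self hε)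
  calc ‖fderiv ℂ f z v - fderiv ℂ f p v‖ ≤ ε / 2 * r / r :=
        norm_fderiv_apply_sub_le hU hf hr (fun t ht => hBU (hline z hzp v hv t ht))
          (fun t ht => hBU (hline p hpp v hv t ht)) fun t ht => by
            rw [← dist_eq_norm]
            refine (hfδ _ (hline z hzp v hv t ht.le) _ (hline p hpp v hv t ht.le) ?_).le
            rw [dist_add_right]; exact hz.trans_le (min_le_left _ _)
    _ = ε / 2 := by field_simp

theorem DifferentiableOn.contDiffOn_one [ProperSpace E] [CompleteSpace F]
    (hf : DifferentiableOn ℂ f U) (hU : IsOpen U) : ContDiffOn ℂ 1 f U :=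
  (contDiffOn_succ_iff_fderiv_of_isOpen (n := 0) hU).2
    ⟨hf, by simp, contDiffOn_zero.2 (hf.continuousOn_fderiv_of_isOpen hU)⟩

end Holomorphic

section Jacobian

variable {n : ℕ}

theorem pderivC_eq_fderiv {g : (Fin n → ℂ) → ℂ} {z : Fin n → ℂ} (j : Fin n)
    (hg : DifferentiableAt ℂ g z) : pderivC j g z = fderiv ℂ g z (Pi.single j 1) := by
  have hg' : HasFDerivAt g (fderiv ℂ g z) (Function.update z j (z j)) := by
    rw [Function.update_eq_self]; exact hg.hasFDerivAt
  exact (hg'.comp_hasDerivAt (z j) (hasDerivAt_update z j (z j))).deriv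

theorem jacDet_eq_det_fderiv {f : (Fin n → ℂ) → (Fin n → ℂ)} {z : Fin n → ℂ}
    (hf : DifferentiableAt ℂ f z) : jacDet f z = (fderiv ℂ f z).det := by
  rw [ContinuousLinearMap.det, ← LinearMap.det_toMatrix', jacDet]
  congr 1
  ext i j
  have hfi := hasFDerivAt_pi'.1 hf.hasFDerivAt i
  rw [Matrix.of_apply, LinearMap.toMatrix'_apply, pderivC_eq_fderiv j hfi.differentiableAt,
    hfi.fderiv]
  rfl

theorem continuousOn_jacDet {f : (Fin n → ℂ) → (Fin n → ℂ)} {U : Set (Fin n → ℂ)}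
    (hU : IsOpen U) (hf : DifferentiableOn ℂ f U) : ContinuousOn (jacDet f) U :=
  (ContinuousLinearMap.continuous_det.comp_continuousOn
    (hf.continuousOn_fderiv_of_isOpen hU)).congr
    fun _ hz => jacDet_eq_det_fderiv (hf.differentiableAt (hU.mem_nhds hz))

end Jacobian

theorem ContDiffAt.exists_mem_nhds_injOn {E : Type*} [NormedAddCommGroup E] [NormedSpace ℝ E]
    [FiniteDimensional ℝ E] {f : E → E} {a : E} (hf : ContDiffAt ℝ 1 f a)
    (hdet : (fderiv ℝ f a).det ≠ 0) : ∃ u ∈ 𝓝 a, InjOn f u := by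
  have hs : HasStrictFDerivAt f
      ((fderiv ℝ f a).toContinuousLinearEquivOfDetNeZero hdet : E →L[ℝ] E) a := by
    simpa using hf.hasStrictFDerivAt one_ne_zero
  exact ⟨_, hs.eventually_left_inverse, fun x hx y hy hxy => hx.symm.trans (hxy ▸ hy)⟩

theorem IsCompact.finite_of_subset_preimage_singleton {α β : Type*} [TopologicalSpace α]
    {f : α → β} {K : Set α} {y : β} (hK : IsCompact K) (hKy : K ⊆ f ⁻¹' {y})
    (hf : ∀ x ∈ K, ∃ u ∈ 𝓝 x, InjOn f u) : K.Finite := by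
  choose! u hu hinj using hf
  obtain ⟨t, htK, hKt⟩ := hK.elim_nhds_subcover u hu
  refine t.finite_toSet.subset fun x hx => ?_
  obtain ⟨a, ha, hxa⟩ := mem_iUnion₂.1 (hKt hx)
  have hax : x = a :=
    hinj a (htK a ha) hxa (mem_of_mem_nhds (hu a (htK a ha))) ((hKy hx).trans (hKy (htK a ha)).symm)
  exact hax ▸ ha

section Multiplicity

variable {α β : Type*}

theorem ENNReal.encard_iUnion_eq_tsum {ι : Type*} {s : ι → Set α} (hs : Pairwise (Disjoint on s)) :
    ((⋃ i, s i).encard : ℝ≥0∞) = ∑' i, ((s i).encard : ℝ≥0∞) := by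
  simp_rw [← ENNReal.tsum_set_one]
  exact ENNReal.tsum_biUnion (f := fun _ => 1) fun i _ j _ hij => hs hij

theorem Set.InjOn.indicator_image_eq_encard_mul {f : α → β} {s : Set α} (hf : InjOn f s)
    (g : β → ℝ≥0∞) (y : β) : (f '' s).indicator g y = (s ∩ f ⁻¹' {y}).encard * g y := by
  by_cases hy : y ∈ f '' s
  · obtain ⟨x, hx, rfl⟩ := hy
    have hfib : s ∩ f ⁻¹' {f x} = {x} :=
      Subset.antisymm (fun x' hx' => hf hx'.1 hx hx'.2) (singleton_subset_iff.2 ⟨hx, rfl⟩)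
    simp [hfib, mem_image_of_mem f hx]
  · have hfib : s ∩ f ⁻¹' {y} = ∅ :=
      eq_empty_of_forall_notMem fun x hx => hy ⟨x, hx.1, hx.2⟩
    simp [hfib, hy]

theorem tsum_indicator_image_eq_encard_mul {ι : Type*} {f : α → β} {D : ι → Set α}
    (hD : Pairwise (Disjoint on D)) (hf : ∀ i, InjOn f (D i)) (g : β → ℝ≥0∞) (y : β) :
    ∑' i, (f '' D i).indicator g y = ((⋃ i, D i) ∩ f ⁻¹' {y}).encard * g y := by
  rw [iUnion_inter, ENNReal.encard_iUnion_eq_tsum fun i j hij => (hD hij).mono inter_subset_left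
    inter_subset_left, ← ENNReal.tsum_mul_right]
  exact tsum_congr fun i => (hf i).indicator_image_eq_encard_mul g y

theorem exists_measurable_partition_injOn [TopologicalSpace α] [SecondCountableTopology α]
    [MeasurableSpace α] [OpensMeasurableSpace α] {f : α → β} {s : Set α} (hs : MeasurableSet s)
    (hf : ∀ x ∈ s, ∃ u ∈ 𝓝 x, InjOn f u) :
    ∃ D : ℕ → Set α, (∀ k, MeasurableSet (D k)) ∧ Pairwise (Disjoint on D) ∧
      ⋃ k, D k = s ∧ ∀ k, InjOn f (D k) := by
  rcases s.eq_empty_or_nonempty with rfl | ⟨x₀, hx₀⟩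
  · exact ⟨fun _ => ∅, fun _ => .empty, fun _ _ _ => disjoint_bot_left, by simp,
      fun _ => injOn_empty f⟩
  choose! u hu hinj using hf
  obtain ⟨t, hts, htc, hst⟩ := TopologicalSpace.countable_cover_nhdsWithin fun x hx =>
    mem_nhdsWithin_of_mem_nhds (interior_mem_nhds.2 (hu x hx))
  have htne : t.Nonempty := by
    obtain ⟨x, hx, -⟩ := mem_iUnion₂.1 (hst hx₀)
    exact ⟨x, hx⟩
  obtain ⟨e, rfl⟩ := htc.exists_eq_range htne
  set U : ℕ → Set α := fun k => interior (u (e k)) ∩ s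
  refine ⟨disjointed U, .disjointed fun k => isOpen_interior.measurableSet.inter hs,
    disjoint_disjointed U, ?_, fun k => ?_⟩
  · rw [iUnion_disjointed, ← iUnion_inter, inter_eq_right]
    simpa using hst
  · exact (hinj _ (hts (mem_range_self k))).mono
      ((disjointed_subset U k).trans (inter_subset_left.trans interior_subset))

variable {E : Type*} [NormedAddCommGroup E] [NormedSpace ℝ E] [FiniteDimensional ℝ E]
  [MeasurableSpace E] [BorelSpace E] (μ : Measure E) [μ.IsAddHaarMeasure]
  {s : Set E} {f : E → E} {f' : E → E →L[ℝ] E}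

theorem lintegral_abs_det_fderiv_mul_comp_eq_lintegral_encard_mul (hs : MeasurableSet s)
    (hf' : ∀ x ∈ s, HasFDerivWithinAt f (f' x) s x) (hf : ∀ x ∈ s, ∃ u ∈ 𝓝 x, InjOn f u)
    {g : E → ℝ≥0∞} (hg : Measurable g) :
    ∫⁻ x in s, ENNReal.ofReal |(f' x).det| * g (f x) ∂μ =
      ∫⁻ y, (s ∩ f ⁻¹' {y}).encard * g y ∂μ := by
  obtain ⟨D, hDm, hDdisj, rfl, hDinj⟩ := exists_measurable_partition_injOn hs hf
  have hD' : ∀ k, ∀ x ∈ D k, HasFDerivWithinAt f (f' x) (D k) x := fun k x hx =>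
    (hf' x (mem_iUnion_of_mem k hx)).mono (subset_iUnion D k)
  have hfD : ∀ k, MeasurableSet (f '' D k) := fun k =>
    measurable_image_of_fderivWithin (hDm k) (hD' k) (hDinj k)
  calc ∫⁻ x in ⋃ k, D k, ENNReal.ofReal |(f' x).det| * g (f x) ∂μ
      = ∑' k, ∫⁻ y in f '' D k, g y ∂μ := by
        rw [lintegral_iUnion hDm hDdisj]
        exact tsum_congr fun k =>
          (lintegral_image_eq_lintegral_abs_det_fderiv_mul μ (hDm k) (hD' k) (hDinj k) g).symm
    _ = ∫⁻ y, ∑' k, (f '' D k).indicator g y ∂μ := by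
        rw [lintegral_tsum fun k => (hg.indicator (hfD k)).aemeasurable]
        exact tsum_congr fun k => (lintegral_indicator (hfD k) g).symm
    _ = ∫⁻ y, ((⋃ k, D k) ∩ f ⁻¹' {y}).encard * g y ∂μ :=
        lintegral_congr fun y => tsum_indicator_image_eq_encard_mul hDdisj hDinj g y

theorem lintegral_abs_det_fderiv_mul_comp_eq_mul (hs : MeasurableSet s)
    (hf' : ∀ x ∈ s, HasFDerivWithinAt f (f' x) s x) (hf : ∀ x ∈ s, ∃ u ∈ 𝓝 x, InjOn f u)
    (hfs : NullMeasurableSet (f '' s) μ) {m : ℕ} (hm : ∀ y ∈ f '' s, (s ∩ f ⁻¹' {y}).encard = m)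
    {g : E → ℝ≥0∞} (hg : Measurable g) :
    ∫⁻ x in s, ENNReal.ofReal |(f' x).det| * g (f x) ∂μ = m * ∫⁻ y in f '' s, g y ∂μ := by
  have hmul : ∀ y, (s ∩ f ⁻¹' {y}).encard * g y = (f '' s).indicator (fun y => m * g y) y := by
    intro y
    by_cases hy : y ∈ f '' s
    · simp [hy, hm y hy]
    · have hfib : s ∩ f ⁻¹' {y} = ∅ :=
        eq_empty_of_forall_notMem fun x hx => hy ⟨x, hx.1, hx.2⟩
      simp [hy, hfib]
  rw [lintegral_abs_det_fderiv_mul_comp_eq_lintegral_encard_mul μ hs hf' hf hg,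
    lintegral_congr hmul, lintegral_indicator₀ hfs, lintegral_const_mul _ hg]

end Multiplicity

section SquareIntegrable

variable {α β G H : Type*} [MeasurableSpace α] [MeasurableSpace β]
  [NormedAddCommGroup G] [NormedAddCommGroup H] {μ : Measure α} {ν : Measure β}

theorem memLp_two_iff_lintegral_enorm_sq_lt_top {φ : α → G} (hφ : AEStronglyMeasurable φ μ) :
    MemLp φ 2 μ ↔ ∫⁻ x, ‖φ x‖ₑ ^ 2 ∂μ < ∞ := by
  rw [MemLp, eLpNorm_lt_top_iff_lintegral_rpow_enorm_lt_top two_ne_zero ENNReal.ofNat_ne_top]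
  simp [hφ]

theorem integral_norm_sq_eq_toReal_lintegral {φ : α → G} (hφ : AEStronglyMeasurable φ μ) :
    ∫ x, ‖φ x‖ ^ 2 ∂μ = (∫⁻ x, ‖φ x‖ₑ ^ 2 ∂μ).toReal := by
  rw [integral_eq_lintegral_of_nonneg_ae (.of_forall fun x => by positivity) (by fun_prop)]
  simp_rw [ENNReal.ofReal_pow (norm_nonneg _), ofReal_norm]

theorem memLp_two_iff_and_integral_norm_sq_eq_of_lintegral_eq {φ : α → G} {ψ : β → H} {c : ℕ}
    (hc : c ≠ 0) (hφ : AEStronglyMeasurable φ μ) (hψ : AEStronglyMeasurable ψ ν)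
    (h : ∫⁻ x, ‖φ x‖ₑ ^ 2 ∂μ = c * ∫⁻ y, ‖ψ y‖ₑ ^ 2 ∂ν) :
    (MemLp φ 2 μ ↔ MemLp ψ 2 ν) ∧ ∫ x, ‖φ x‖ ^ 2 ∂μ = c * ∫ y, ‖ψ y‖ ^ 2 ∂ν := by
  rw [memLp_two_iff_lintegral_enorm_sq_lt_top hφ, memLp_two_iff_lintegral_enorm_sq_lt_top hψ,
    integral_norm_sq_eq_toReal_lintegral hφ, integral_norm_sq_eq_toReal_lintegral hψ, h,
    ENNReal.toReal_mul, ENNReal.toReal_natCast]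
  exact ⟨⟨fun h => ENNReal.lt_top_of_mul_ne_top_right h.ne (by exact_mod_cast hc),
    ENNReal.mul_lt_top (ENNReal.natCast_lt_top c)⟩, rfl⟩

end SquareIntegrable

theorem encard_diff_inter_preimage_eq {α β : Type*} [TopologicalSpace α] [TopologicalSpace β]
    {f : α → β} {Ω₁ E : Set α} {Ω₂ : Set β} {m : ℕ}
    (hproper : ∀ L : Set β, L ⊆ Ω₂ → IsCompact L → IsCompact (Ω₁ ∩ f ⁻¹' L))
    (hf : ∀ z ∈ Ω₁ \ E, ∃ u ∈ 𝓝 z, InjOn f u)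
    (hcount : ∀ w ∈ Ω₂ \ f '' E, ((Ω₁ \ E) ∩ f ⁻¹' {w}).ncard = m) {w : β}
    (hw : w ∈ Ω₂ \ f '' E) : ((Ω₁ \ E) ∩ f ⁻¹' {w}).encard = m := by
  have hfib : (Ω₁ \ E) ∩ f ⁻¹' {w} = Ω₁ ∩ f ⁻¹' {w} :=
    Subset.antisymm (inter_subset_inter_left _ sdiff_subset)
      fun z hz => ⟨⟨hz.1, fun hzE => hw.2 ⟨z, hzE, hz.2⟩⟩, hz.2⟩
  have hK : IsCompact ((Ω₁ \ E) ∩ f ⁻¹' {w}) :=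
    hfib ▸ hproper {w} (singleton_subset_iff.2 hw.1) isCompact_singleton
  rw [← (hK.finite_of_subset_preimage_singleton inter_subset_right
    fun z hz => hf z hz.1).cast_ncard_eq, hcount w hw]

theorem lintegral_enorm_jacDet_sq_mul_comp {n m : ℕ} {Ω₁ Ω₂ E : Set (Fin n → ℂ)}
    {f : (Fin n → ℂ) → (Fin n → ℂ)} (hΩ₁ : IsOpen Ω₁) (hΩ₂ : IsOpen Ω₂)
    (hf : DifferentiableOn ℂ f Ω₁) (hE : E = {z ∈ Ω₁ | jacDet f z = 0})
    (hE0 : volume E = 0) (hfE0 : volume (f '' E) = 0)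
    (hloc : ∀ z ∈ Ω₁ \ E, ∃ u ∈ 𝓝 z, InjOn f u)
    (hfib : ∀ w ∈ Ω₂ \ f '' E, ((Ω₁ \ E) ∩ f ⁻¹' {w}).encard = m)
    (honto : f '' (Ω₁ \ E) = Ω₂ \ f '' E)
    (hjac : ∀ z ∈ Ω₁, LinearMap.det ((fderiv ℝ f z).toLinearMap) = ‖jacDet f z‖ ^ 2)
    {g : (Fin n → ℂ) → ℝ≥0∞} (hg : Measurable g) :
    ∫⁻ z in Ω₁, ‖jacDet f z‖ₑ ^ 2 * g (f z) = m * ∫⁻ w in Ω₂, g w := by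
  have hV : IsOpen (Ω₁ \ E) := by
    have hVeq : Ω₁ \ E = Ω₁ ∩ jacDet f ⁻¹' {0}ᶜ := by ext z; simp [hE]
    exact hVeq ▸ (continuousOn_jacDet hΩ₁ hf).isOpen_inter_preimage hΩ₁ isOpen_compl_singleton
  have hf' : ∀ z ∈ Ω₁ \ E, HasFDerivWithinAt f (fderiv ℝ f z) (Ω₁ \ E) z := fun z hz =>
    ((hf.differentiableAt (hΩ₁.mem_nhds hz.1)).restrictScalars ℝ).hasFDerivAt.hasFDerivWithinAt
  have hW : NullMeasurableSet (f '' (Ω₁ \ E)) volume :=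
    honto ▸ hΩ₂.measurableSet.nullMeasurableSet.diff (.of_null hfE0)
  calc ∫⁻ z in Ω₁, ‖jacDet f z‖ₑ ^ 2 * g (f z)
      = ∫⁻ z in Ω₁ \ E, ENNReal.ofReal |(fderiv ℝ f z).det| * g (f z) := by
        rw [← setLIntegral_congr (sdiff_null_ae_eq_self (s := Ω₁) hE0)]
        refine setLIntegral_congr_fun hV.measurableSet fun z hz => ?_
        rw [ContinuousLinearMap.det, hjac z hz.1, abs_of_nonneg (by positivity),
          ENNReal.ofReal_pow (norm_nonneg _), ofReal_norm]
    _ = m * ∫⁻ w in f '' (Ω₁ \ E), g w :=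
        lintegral_abs_det_fderiv_mul_comp_eq_mul volume hV.measurableSet hf' hloc hW
          (fun w hw => hfib w (honto ▸ hw)) hg
    _ = m * ∫⁻ w in Ω₂, g w := by
        rw [honto, setLIntegral_congr (sdiff_null_ae_eq_self hfE0)]

theorem proper_map_L2_isometry_general
    {n m : ℕ} (Ω₁ Ω₂ : Set (Fin n → ℂ))
    (hΩ₁o : IsOpen Ω₁)
    (hΩ₂o : IsOpen Ω₂) (hΩ₂c : IsConnected Ω₂)
    (f : (Fin n → ℂ) → (Fin n → ℂ))
    (hf : DifferentiableOn ℂ f Ω₁)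
    -- `f : Ω₁ → Ω₂` is proper
    (hproper : ∀ L : Set (Fin n → ℂ), L ⊆ Ω₂ → IsCompact L → IsCompact (Ω₁ ∩ f ⁻¹' L))
    -- the critical set `E = {u = 0}` and its image have measure zero
    (E : Set (Fin n → ℂ)) (hE : E = {z ∈ Ω₁ | jacDet f z = 0})
    (hE0 : volume E = 0) (hfE0 : volume (f '' E) = 0)
    -- `f` is an `m`-to-one covering of `Ω₁ \ E` onto `Ω₂ \ f(E)`
    (hcount : ∀ w ∈ Ω₂ \ f '' E, ((Ω₁ \ E) ∩ f ⁻¹' {w}).ncard = m)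
    (honto : f '' (Ω₁ \ E) = Ω₂ \ f '' E)
    -- the real Jacobian determinant of `f` equals `|u|²`
    (hjac : ∀ z ∈ Ω₁, LinearMap.det ((fderiv ℝ f z).toLinearMap) = ‖jacDet f z‖ ^ 2)
    (ψ : (Fin n → ℂ) → ℂ) (hψm : Measurable ψ) :
    (MemLp (fun z => jacDet f z * ψ (f z)) 2 (volume.restrict Ω₁)
        ↔ MemLp ψ 2 (volume.restrict Ω₂)) ∧
      (MemLp ψ 2 (volume.restrict Ω₂) →
        ∫ z in Ω₁, ‖jacDet f z * ψ (f z)‖ ^ 2 = m * ∫ w in Ω₂, ‖ψ w‖ ^ 2) := by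
  have hloc : ∀ z ∈ Ω₁ \ E, ∃ u ∈ 𝓝 z, InjOn f u := by
    intro z hz
    have hC1 : ContDiffAt ℝ 1 f z :=
      ((hf.contDiffOn_one hΩ₁o).restrict_scalars ℝ).contDiffAt (hΩ₁o.mem_nhds hz.1)
    refine hC1.exists_mem_nhds_injOn ?_
    rw [ContinuousLinearMap.det, hjac z hz.1]
    exact pow_ne_zero 2 (norm_ne_zero_iff.2 fun h => hz.2 (hE ▸ ⟨hz.1, h⟩))
  have hfib : ∀ w ∈ Ω₂ \ f '' E, ((Ω₁ \ E) ∩ f ⁻¹' {w}).encard = m := fun w hw =>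
    encard_diff_inter_preimage_eq hproper hloc hcount hw
  have hm : m ≠ 0 := by
    obtain ⟨w, hw⟩ := nonempty_of_measure_ne_zero (s := Ω₂ \ f '' E) (μ := volume)
      (by rw [measure_sdiff_null hfE0]; exact (hΩ₂o.measure_pos volume hΩ₂c.nonempty).ne')
    obtain ⟨z, hz, rfl⟩ := honto ▸ hw
    have hne : ((Ω₁ \ E) ∩ f ⁻¹' {f z}).encard ≠ 0 := encard_ne_zero.2 ⟨z, hz, rfl⟩
    exact_mod_cast hfib _ hw ▸ hne
  have hu : AEStronglyMeasurable (fun z => jacDet f z * ψ (f z)) (volume.restrict Ω₁) :=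
    ((continuousOn_jacDet hΩ₁o hf).aestronglyMeasurable hΩ₁o.measurableSet).mul
      (hψm.comp_aemeasurable (hf.continuousOn.aemeasurable hΩ₁o.measurableSet)).aestronglyMeasurable
  have hkey := lintegral_enorm_jacDet_sq_mul_comp hΩ₁o hΩ₂o hf hE hE0 hfE0 hloc hfib honto hjac
    (hψm.enorm.pow_const 2)
  simp_rw [← mul_pow, ← enorm_mul] at hkey
  obtain ⟨hiff, hint⟩ := memLp_two_iff_and_integral_norm_sq_eq_of_lintegral_eq hm hu
    hψm.aestronglyMeasurable hkey
  exact ⟨hiff, fun _ => hint⟩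

/-- Change-of-variables isometry for a proper holomorphic map of degree `m`:
for measurable `ψ`, `u·(ψ∘f) ∈ L²(Ω₁)` iff `ψ ∈ L²(Ω₂)`, and then
`‖u·(ψ∘f)‖²_{L²(Ω₁)} = m·‖ψ‖²_{L²(Ω₂)}`. -/
theorem proper_map_L2_isometry
    {n m : ℕ} (Ω₁ Ω₂ : Set (Fin n → ℂ))
    (hΩ₁o : IsOpen Ω₁) (hΩ₁c : IsConnected Ω₁) (hΩ₁b : Bornology.IsBounded Ω₁)
    (hΩ₂o : IsOpen Ω₂) (hΩ₂c : IsConnected Ω₂) (hΩ₂b : Bornology.IsBounded Ω₂)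
    (f : (Fin n → ℂ) → (Fin n → ℂ))
    (hf : DifferentiableOn ℂ f Ω₁) (hmaps : Set.MapsTo f Ω₁ Ω₂)
    -- `f : Ω₁ → Ω₂` is proper
    (hproper : ∀ L : Set (Fin n → ℂ), L ⊆ Ω₂ → IsCompact L → IsCompact (Ω₁ ∩ f ⁻¹' L))
    -- the critical set `E = {u = 0}` and its image have measure zero
    (E : Set (Fin n → ℂ)) (hE : E = {z ∈ Ω₁ | jacDet f z = 0})
    (hE0 : volume E = 0) (hfE0 : volume (f '' E) = 0)
    -- `f` is an `m`-to-one covering of `Ω₁ \ E` onto `Ω₂ \ f(E)`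
    (hcount : ∀ w ∈ Ω₂ \ f '' E, ((Ω₁ \ E) ∩ f ⁻¹' {w}).ncard = m)
    (honto : f '' (Ω₁ \ E) = Ω₂ \ f '' E)
    -- the real Jacobian determinant of `f` equals `|u|²`
    (hjac : ∀ z ∈ Ω₁, LinearMap.det ((fderiv ℝ f z).toLinearMap) = ‖jacDet f z‖ ^ 2)
    (ψ : (Fin n → ℂ) → ℂ) (hψm : Measurable ψ) :
    (MemLp (fun z => jacDet f z * ψ (f z)) 2 (volume.restrict Ω₁)
        ↔ MemLp ψ 2 (volume.restrict Ω₂)) ∧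
      (MemLp ψ 2 (volume.restrict Ω₂) →
        ∫ z in Ω₁, ‖jacDet f z * ψ (f z)‖ ^ 2 = m * ∫ w in Ω₂, ‖ψ w‖ ^ 2) :=
  proper_map_L2_isometry_general Ω₁ Ω₂ hΩ₁o hΩ₂o hΩ₂c f hf hproper E hE hE0 hfE0 hcount honto hjac ψ
    hψm
end

section
/- Let Ω ⊂ ℂ be a bounded smoothly bounded domain whose boundary has inner components γ₁,…,γ_{m−1}, and suppose ζ₁,…,ζ_{m−1} ∈ Ω are such that the (m−1)×(m−1) period matrix M with entries M_{ij} = ∮_{γ_i} K_Ω(z, ζ_j) dz is invertible. Then for every holomorphic u(z', z_n) on D × Ω with D ⊂ ℂ^{n−1} a domain, there exist unique holomorphic functions a₁(z'),…,a_{m−1}(z') on D such that v(z', z_n) = u(z', z_n) − Σ_j a_j(z')K_Ω(z_n, ζ_j) has vanishing periods: ∮_{γ_i} v(z', z_n) dz_n = 0 for all i and all z' ∈ D. Consequently ∂g/∂z_n = v admits a single-valued holomorphic solution g on D × Ω. -/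
/-!
The coefficients are forced: by linearity the periods of `u - Σ_j a_j K(·, ζ_j)` around the `γ_i`
are `c(z') - M a(z')`, where `c(z')` are the periods of `u(z', ·)`, so they vanish exactly when
`a(z') = M⁻¹ c(z')`, which is holomorphic in `z'` because `c` is (differentiation under the integral
sign, with Cauchy estimates bounding the derivative on compacta). For each `z'` the function
`v(z', ·)` then has a primitive on `Ω`; normalized to vanish at a base point `z₀`, these primitives
form a holomorphic function of `(z', w)`: near any `(z', w₀)` the primitive is its value at `w₀`
plus `(w - w₀) ∫₀¹ v(z', w₀ + t (w - w₀)) dt`, and a connectedness argument along `Ω` shows that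
its value at `w₀` depends holomorphically on `z'`.
-/

open MeasureTheory intervalIntegral

open Metric Set

open scoped Matrix

section CauchyEstimate

variable {E F : Type*} [NormedAddCommGroup E] [NormedSpace ℂ E]
  [NormedAddCommGroup F] [NormedSpace ℂ F]

theorem norm_fderiv_le_of_forall_mem_ball_norm_le {f : E → F} {x : E} {r C : ℝ} (hr : 0 < r)
    (hf : DifferentiableOn ℂ f (ball x r)) (hC : ∀ y ∈ ball x r, ‖f y‖ ≤ C) :
    ‖fderiv ℂ f x‖ ≤ 2 * C / r := by
  have hC0 : 0 ≤ C := (norm_nonneg _).trans (hC x (mem_ball_self hr))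
  refine ContinuousLinearMap.opNorm_le_bound _ (by positivity) fun d => ?_
  rcases eq_or_ne d 0 with rfl | hd
  · simp
  -- Cauchy's estimate for `f` restricted to the complex line through `x` in direction `d`
  set R := r / (2 * ‖d‖)
  have hR : 0 < R := by positivity
  have hline : MapsTo (fun z : ℂ => x + z • d) (closedBall 0 R) (ball x r) := by
    intro z hz
    rw [mem_closedBall, dist_zero_right] at hz
    rw [mem_ball, dist_eq_norm, add_sub_cancel_left, norm_smul]
    calc ‖z‖ * ‖d‖ ≤ R * ‖d‖ := by gcongr
      _ < r := by
        rw [div_mul_eq_mul_div, div_lt_iff₀ (by positivity)]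
        nlinarith [norm_pos_iff.2 hd]
  have hg : DiffContOnCl ℂ (fun z : ℂ => f (x + z • d)) (ball 0 R) :=
    ((hf.comp (by fun_prop : Differentiable ℂ fun z : ℂ => x + z • d).differentiableOn hline).mono
      closure_ball_subset_closedBall).diffContOnCl
  have hderiv : HasDerivAt (fun z : ℂ => f (x + z • d)) (fderiv ℂ f x d) 0 := by
    have hx : HasFDerivAt f (fderiv ℂ f x) (x + (0 : ℂ) • d) := by
      simpa using (hf.differentiableAt (isOpen_ball.mem_nhds (mem_ball_self hr))).hasFDerivAt
    simpa [Function.comp_def] using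
      hx.comp_hasDerivAt 0 (((hasDerivAt_id (0 : ℂ)).smul_const d).const_add x)
  calc ‖fderiv ℂ f x d‖ ≤ C / R := hderiv.deriv ▸
        Complex.norm_deriv_le_of_forall_mem_sphere_norm_le hR hg
          fun z hz => hC _ (hline (sphere_subset_closedBall hz))
    _ = 2 * C / r * ‖d‖ := by simp only [R]; field_simp

theorem IsCompact.exists_bound_norm_fderiv [ProperSpace E] {U K : Set E} {f : E → F}
    (hU : IsOpen U) (hf : DifferentiableOn ℂ f U) (hK : IsCompact K) (hKU : K ⊆ U) :
    ∃ C, ∀ x ∈ K, ‖fderiv ℂ f x‖ ≤ C := by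
  obtain ⟨δ, hδ, hδU⟩ := hK.exists_cthickening_subset_open hU hKU
  obtain ⟨C, hC⟩ := hK.cthickening.exists_bound_of_continuousOn (hf.continuousOn.mono hδU)
  have hball : ∀ x ∈ K, ball x δ ⊆ cthickening δ K := fun x hx =>
    (ball_subset_thickening hx δ).trans (thickening_subset_cthickening δ K)
  exact ⟨2 * C / δ, fun x hx => norm_fderiv_le_of_forall_mem_ball_norm_le hδ
    ((hf.mono hδU).mono (hball x hx)) fun y hy => hC y (hball x hx hy)⟩

end CauchyEstimate

section ParametricIntegral

variable {H E : Type*} [NormedAddCommGroup H] [NormedSpace ℂ H]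
  [NormedAddCommGroup E] [NormedSpace ℂ E]

lemma exists_forall_mem_ball_dist_apply_lt {s : Set ℝ} (hs : IsCompact s) {A : ℝ → H →L[ℂ] E}
    (hA : ContinuousOn A s) (x₀ : H) {δ : ℝ} (hδ : 0 < δ) :
    ∃ ε > 0, ∀ x ∈ ball x₀ ε, ∀ t ∈ s, dist (A t x) (A t x₀) < δ := by
  obtain ⟨C, hC⟩ := hs.exists_bound_of_continuousOn hA
  refine ⟨δ / (|C| + 1), by positivity, fun x hx t ht => ?_⟩
  rw [mem_ball, dist_eq_norm] at hx
  calc dist (A t x) (A t x₀) = ‖A t (x - x₀)‖ := by rw [dist_eq_norm, map_sub]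
    _ ≤ (|C| + 1) * ‖x - x₀‖ :=
      (A t).le_of_opNorm_le (((hC t ht).trans (le_abs_self C)).trans (le_add_of_nonneg_right
        zero_le_one)) _
    _ < (|C| + 1) * (δ / (|C| + 1)) := by gcongr
    _ = δ := by field_simp

lemma exists_ball_isCompact_mapsTo_add_apply [ProperSpace E] {U : Set E} (hU : IsOpen U) {c : ℝ → E}
    {A : ℝ → H →L[ℂ] E} (hc : ContinuousOn c (Icc 0 1)) (hA : ContinuousOn A (Icc 0 1))
    {x₀ : H} (hx₀ : MapsTo (fun t => c t + A t x₀) (Icc 0 1) U) :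
    ∃ ε > 0, ∃ K ⊆ U, IsCompact K ∧ ∀ x ∈ ball x₀ ε, MapsTo (fun t => c t + A t x) (Icc 0 1) K := by
  have hT : IsCompact ((fun t => c t + A t x₀) '' Icc 0 1) :=
    isCompact_Icc.image_of_continuousOn
      (hc.add ((ContinuousLinearMap.apply ℂ E x₀).continuous.comp_continuousOn hA))
  obtain ⟨δ, hδ, hδU⟩ := hT.exists_cthickening_subset_open hU (image_subset_iff.2 hx₀)
  obtain ⟨ε, hε, hεδ⟩ := exists_forall_mem_ball_dist_apply_lt isCompact_Icc hA x₀ hδ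
  refine ⟨ε, hε, _, hδU, hT.cthickening, fun x hx t ht => ?_⟩
  exact thickening_subset_cthickening _ _ (mem_thickening_iff.2
    ⟨_, mem_image_of_mem _ ht, by rw [dist_add_left]; exact hεδ x hx t ht⟩)

theorem DifferentiableOn.differentiableAt_intervalIntegral_comp_add_apply
    [FiniteDimensional ℂ H] [FiniteDimensional ℂ E] {U : Set E}
    (hU : IsOpen U) {f : E → ℂ} (hf : DifferentiableOn ℂ f U)
    {c : ℝ → E} {A : ℝ → H →L[ℂ] E} {ψ : ℝ → ℂ} (hc : ContinuousOn c (Icc 0 1))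
    (hA : ContinuousOn A (Icc 0 1)) (hψ : ContinuousOn ψ (Icc 0 1))
    {x₀ : H} (hx₀ : MapsTo (fun t => c t + A t x₀) (Icc 0 1) U) :
    DifferentiableAt ℂ (fun x => ∫ t in (0 : ℝ)..1, f (c t + A t x) * ψ t) x₀ := by
  borelize E (H →L[ℂ] ℂ)
  have hIoc : uIoc (0 : ℝ) 1 ⊆ Icc 0 1 := by
    rw [uIoc_of_le zero_le_one]; exact Ioc_subset_Icc_self
  have hcA : ∀ x, ContinuousOn (fun t => c t + A t x) (Icc 0 1) := fun x =>
    hc.add ((ContinuousLinearMap.apply ℂ E x).continuous.comp_continuousOn hA)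
  obtain ⟨ε, hε, K, hKU, hK, hnear⟩ := exists_ball_isCompact_mapsTo_add_apply hU hc hA hx₀
  obtain ⟨Cf, hCf⟩ := hK.exists_bound_norm_fderiv hU hf hKU
  obtain ⟨CA, hCA⟩ := isCompact_Icc.exists_bound_of_continuousOn hA
  obtain ⟨Cψ, hCψ⟩ := isCompact_Icc.exists_bound_of_continuousOn hψ
  have hfcA : ∀ x ∈ ball x₀ ε, ContinuousOn (fun t => f (c t + A t x) * ψ t) (Icc 0 1) :=
    fun x hx => (hf.continuousOn.comp (hcA x) fun t ht => hKU (hnear x hx ht)).mul hψ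
  refine (hasFDerivAt_integral_of_dominated_of_fderiv_le (bound := fun _ => Cψ * (Cf * CA))
    (F' := fun x t => ψ t • (fderiv ℂ f (c t + A t x)).comp (A t))
    (ball_mem_nhds x₀ hε) ?_ ?_ ?_ ?_ intervalIntegrable_const ?_).differentiableAt
  · filter_upwards [ball_mem_nhds x₀ hε] with x hx
    exact ((hfcA x hx).mono hIoc).aestronglyMeasurable measurableSet_uIoc
  · exact (hfcA x₀ (mem_ball_self hε)).intervalIntegrable_of_Icc zero_le_one
  · have hL : AEMeasurable (fun t => (fderiv ℂ f (c t + A t x₀)).comp (A t))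
        (volume.restrict (uIoc (0 : ℝ) 1)) :=
      (ContinuousLinearMap.compL ℂ H E ℂ).continuous₂.measurable.comp_aemeasurable
        (((measurable_fderiv ℂ f).comp_aemeasurable
          (((hcA x₀).mono hIoc).aemeasurable measurableSet_uIoc)).prodMk
          ((hA.mono hIoc).aemeasurable measurableSet_uIoc))
    exact (continuous_smul.measurable.comp_aemeasurable
      (((hψ.mono hIoc).aemeasurable measurableSet_uIoc).prodMk hL)).aestronglyMeasurable
  · refine Filter.Eventually.of_forall fun t ht x hx => ?_
    have hf' := hCf _ (hnear x hx (hIoc ht))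
    calc ‖ψ t • (fderiv ℂ f (c t + A t x)).comp (A t)‖
        ≤ ‖ψ t‖ * (‖fderiv ℂ f (c t + A t x)‖ * ‖A t‖) := by
          rw [norm_smul]; gcongr; exact ContinuousLinearMap.opNorm_comp_le _ _
      _ ≤ Cψ * (Cf * CA) :=
        mul_le_mul (hCψ t (hIoc ht)) (mul_le_mul hf' (hCA t (hIoc ht)) (norm_nonneg _)
          ((norm_nonneg _).trans hf')) (by positivity) ((norm_nonneg _).trans (hCψ t (hIoc ht)))
  · refine Filter.Eventually.of_forall fun t ht x hx => ?_
    have hfx : DifferentiableAt ℂ f (c t + A t x) :=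
      hf.differentiableAt (hU.mem_nhds (hKU (hnear x hx (hIoc ht))))
    exact (hfx.hasFDerivAt.comp x ((A t).hasFDerivAt.const_add (c t))).mul_const (ψ t)

end ParametricIntegral

section ProductDomain

theorem Convex.sub_eq_smul_integral_of_hasDerivAt {F : Type*} [NormedAddCommGroup F]
    [NormedSpace ℂ F] [CompleteSpace F] {s : Set ℂ} (hs : Convex ℝ s) {G g : ℂ → F}
    (hg : ContinuousOn g s) (hG : ∀ z ∈ s, HasDerivAt G (g z) z) {a w : ℂ} (ha : a ∈ s)
    (hw : w ∈ s) :
    G w - G a = (w - a) • ∫ t in (0 : ℝ)..1, g (a + t • (w - a)) := by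
  have hseg : MapsTo (fun t : ℝ => a + t • (w - a)) (Icc 0 1) s := fun t ht =>
    hs.add_smul_sub_mem ha hw ht
  rw [integral_unitInterval_deriv_eq_sub (hg.comp (by fun_prop) hseg)
    fun t ht => hG _ (hseg ht), add_sub_cancel]

lemma sub_eq_mul_integral_segment_of_hasDerivAt {E : Type*} [TopologicalSpace E] {D : Set E}
    {Ω : Set ℂ} {v : E × ℂ → ℂ} (hv : ContinuousOn v (D ×ˢ Ω))
    {G : E → ℂ → ℂ} (hG : ∀ z' ∈ D, ∀ w ∈ Ω, HasDerivAt (G z') (v (z', w)) w) {z' : E}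
    (hz' : z' ∈ D) {a : ℂ} {r : ℝ} (har : ball a r ⊆ Ω) {w : ℂ} (hw : w ∈ ball a r) :
    G z' w - G z' a = (w - a) * ∫ t in (0 : ℝ)..1, v (z', a + t • (w - a)) :=
  (convex_ball a r).sub_eq_smul_integral_of_hasDerivAt
    (hv.comp (by fun_prop) fun _ hz => ⟨hz', har hz⟩) (fun z hz => hG z' hz' z (har hz))
    (mem_ball_self (pos_of_mem_ball hw)) hw

variable {E : Type*} [NormedAddCommGroup E] [NormedSpace ℂ E] [FiniteDimensional ℂ E]
  {D : Set E} {Ω : Set ℂ} {v : E × ℂ → ℂ}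

theorem differentiableOn_intervalIntegral_mul (hD : IsOpen D) (hΩ : IsOpen Ω)
    (hv : DifferentiableOn ℂ v (D ×ˢ Ω)) {γ ψ : ℝ → ℂ} (hγ : ContinuousOn γ (Icc 0 1))
    (hγΩ : MapsTo γ (Icc 0 1) Ω) (hψ : ContinuousOn ψ (Icc 0 1)) :
    DifferentiableOn ℂ (fun z' => ∫ t in (0 : ℝ)..1, v (z', γ t) * ψ t) D := by
  intro z' hz'
  have hd := hv.differentiableAt_intervalIntegral_comp_add_apply (hD.prod hΩ)
    (c := fun t => ((0 : E), γ t)) (A := fun _ => ContinuousLinearMap.inl ℂ E ℂ)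
    (continuousOn_const.prodMk hγ) continuousOn_const hψ (x₀ := z')
    fun t ht => by simpa using ⟨hz', hγΩ ht⟩
  simpa using hd.differentiableWithinAt

theorem differentiableAt_integral_segment (hD : IsOpen D) (hΩ : IsOpen Ω)
    (hv : DifferentiableOn ℂ v (D ×ˢ Ω)) {a : ℂ} {r : ℝ} (har : ball a r ⊆ Ω) {q : E × ℂ}
    (hq : q ∈ D ×ˢ ball a r) :
    DifferentiableAt ℂ (fun q : E × ℂ => ∫ t in (0 : ℝ)..1, v (q.1, a + t • (q.2 - a))) q := by
  set A : ℝ → (E × ℂ) →L[ℂ] (E × ℂ) := fun t =>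
    (ContinuousLinearMap.inl ℂ E ℂ).comp (ContinuousLinearMap.fst ℂ E ℂ) +
      (t : ℂ) • (ContinuousLinearMap.inr ℂ E ℂ).comp (ContinuousLinearMap.snd ℂ E ℂ)
  have hA : ∀ (t : ℝ) (q : E × ℂ), ((0 : E), a - t • a) + A t q = (q.1, a + t • (q.2 - a)) := by
    intro t q
    ext
    · simp [A]
    · simp [A, Complex.real_smul]; ring
  have hd := hv.differentiableAt_intervalIntegral_comp_add_apply (hD.prod hΩ)
    (c := fun t => ((0 : E), a - t • a)) (A := A) (ψ := fun _ => 1) (by fun_prop) (by fun_prop)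
    continuousOn_const (x₀ := q) fun t ht => by
      simp only [hA]
      exact ⟨hq.1, har ((convex_ball a r).add_smul_sub_mem
        (mem_ball_self (pos_of_mem_ball hq.2)) hq.2 ht)⟩
  simpa only [hA, mul_one] using hd

/-- By the segment formula, "`G · y - G · x` is holomorphic on `D`" is an equivalence relation
on `Ω` with open classes, so it has a single class. -/
lemma differentiableOn_sub_of_hasDerivAt (hD : IsOpen D) (hΩo : IsOpen Ω)
    (hΩc : IsPreconnected Ω) (hv : DifferentiableOn ℂ v (D ×ˢ Ω)) {G : E → ℂ → ℂ}
    (hG : ∀ z' ∈ D, ∀ w ∈ Ω, HasDerivAt (G z') (v (z', w)) w) {x y : ℂ} (hx : x ∈ Ω)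
    (hy : y ∈ Ω) :
    DifferentiableOn ℂ (fun z' => G z' y - G z' x) D := by
  refine hΩc.induction₂ (fun x y => DifferentiableOn ℂ (fun z' => G z' y - G z' x) D)
    (fun x hx => ?_) (fun x y z _ _ _ hxy hyz => ?_) (fun x y _ _ hxy => ?_) hx hy
  · obtain ⟨r, hr, hxr⟩ := isOpen_iff.1 hΩo x hx
    filter_upwards [nhdsWithin_le_nhds (ball_mem_nhds x hr)] with y hy z' hz'
    have hI : DifferentiableAt ℂ (fun z' => ∫ t in (0 : ℝ)..1, v (z', x + t • (y - x))) z' :=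
      (differentiableAt_integral_segment hD hΩo hv hxr ⟨hz', hy⟩).comp z'
        (differentiableAt_id.prodMk (differentiableAt_const y))
    refine ((hI.const_mul (y - x)).congr_of_eventuallyEq ?_).differentiableWithinAt
    filter_upwards [hD.mem_nhds hz'] with z'' hz''
    exact sub_eq_mul_integral_segment_of_hasDerivAt hv.continuousOn hG hz'' hxr hy
  · exact (hxy.add hyz).congr fun z' _ => (sub_add_sub_cancel' _ _ _).symm
  · exact hxy.neg.congr fun z' _ => (neg_sub _ _).symm

theorem exists_differentiableOn_hasDerivAt_snd (hD : IsOpen D) (hΩo : IsOpen Ω)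
    (hΩc : IsPreconnected Ω) (hv : DifferentiableOn ℂ v (D ×ˢ Ω))
    (hprim : ∀ z' ∈ D, ∃ G : ℂ → ℂ, ∀ w ∈ Ω, HasDerivAt G (v (z', w)) w) :
    ∃ g : E × ℂ → ℂ, DifferentiableOn ℂ g (D ×ˢ Ω) ∧
      ∀ z' ∈ D, ∀ w ∈ Ω, HasDerivAt (fun w => g (z', w)) (v (z', w)) w := by
  choose! G hG using hprim
  rcases Ω.eq_empty_or_nonempty with rfl | ⟨z₀, hz₀⟩
  · exact ⟨0, by simp, by simp⟩
  refine ⟨fun q => G q.1 q.2 - G q.1 z₀, fun q hq => ?_,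
    fun z' hz' w hw => (hG z' hz' w hw).sub_const (G z' z₀)⟩
  obtain ⟨r, hr, hqr⟩ := isOpen_iff.1 hΩo q.2 hq.2
  have hq' : q ∈ D ×ˢ ball q.2 r := ⟨hq.1, mem_ball_self hr⟩
  have hdiff : DifferentiableAt ℂ (fun q' : E × ℂ => (G q'.1 q.2 - G q'.1 z₀) +
      (q'.2 - q.2) * ∫ t in (0 : ℝ)..1, v (q'.1, q.2 + t • (q'.2 - q.2))) q :=
    (((differentiableOn_sub_of_hasDerivAt hD hΩo hΩc hv hG hz₀ hq.2).differentiableAt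
      (hD.mem_nhds hq.1)).comp q differentiableAt_fst).add
      ((differentiableAt_snd.sub_const _).mul (differentiableAt_integral_segment hD hΩo hv hqr hq'))
  refine (hdiff.congr_of_eventuallyEq ?_).differentiableWithinAt
  filter_upwards [(hD.prod isOpen_ball).mem_nhds hq'] with q' hq'
  rw [← sub_eq_mul_integral_segment_of_hasDerivAt hv.continuousOn hG hq'.1 hqr hq'.2]
  ring

end ProductDomain

theorem Matrix.mulVec_eq_iff_eq_nonsing_inv_mulVec {n α : Type*} [Fintype n] [DecidableEq n]
    [CommRing α] {A : Matrix n n α} (h : IsUnit A.det) {x b : n → α} :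
    A *ᵥ x = b ↔ x = A⁻¹ *ᵥ b := by
  constructor
  · rintro rfl
    rw [mulVec_mulVec, nonsing_inv_mul _ h, one_mulVec]
  · rintro rfl
    rw [mulVec_mulVec, mul_nonsing_inv _ h, one_mulVec]

theorem intervalIntegral.integral_sub_sum_mul_mul {ι : Type*} [Fintype ι] {f ψ : ℝ → ℂ}
    {k : ι → ℝ → ℂ} {a b : ℝ} (hf : IntervalIntegrable (fun t => f t * ψ t) volume a b)
    (hk : ∀ j, IntervalIntegrable (fun t => k j t * ψ t) volume a b) (x : ι → ℂ) :
    ∫ t in a..b, (f t - ∑ j, x j * k j t) * ψ t =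
      (∫ t in a..b, f t * ψ t) - ∑ j, x j * ∫ t in a..b, k j t * ψ t := by
  have hxk : ∀ j ∈ Finset.univ, IntervalIntegrable (fun t => x j * (k j t * ψ t)) volume a b :=
    fun j _ => (hk j).const_mul (x j)
  have hsum : IntervalIntegrable (fun t => ∑ j, x j * (k j t * ψ t)) volume a b := by
    simpa only [Finset.sum_fn] using IntervalIntegrable.sum _ hxk
  simp_rw [sub_mul, Finset.sum_mul, mul_assoc]
  rw [integral_sub hf hsum, integral_finsetSum hxk]
  simp_rw [integral_const_mul]

theorem intervalIntegral.forall_integral_sub_sum_mul_mul_eq_zero_iff {ι : Type*} [Fintype ι]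
    [DecidableEq ι] {f ψ : ι → ℝ → ℂ} {k : ι → ι → ℝ → ℂ} {a b : ℝ}
    (hf : ∀ i, IntervalIntegrable (fun t => f i t * ψ i t) volume a b)
    (hk : ∀ i j, IntervalIntegrable (fun t => k i j t * ψ i t) volume a b)
    {M : Matrix ι ι ℂ} (hM : M = Matrix.of fun i j => ∫ t in a..b, k i j t * ψ i t)
    (hMinv : IsUnit M.det) (x : ι → ℂ) :
    (∀ i, ∫ t in a..b, (f i t - ∑ j, x j * k i j t) * ψ i t = 0) ↔
      x = M⁻¹ *ᵥ fun i => ∫ t in a..b, f i t * ψ i t := by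
  simp only [integral_sub_sum_mul_mul (hf _) (hk _), sub_eq_zero]
  rw [← Matrix.mulVec_eq_iff_eq_nonsing_inv_mulVec hMinv, funext_iff, hM]
  simp only [Matrix.mulVec, dotProduct, Matrix.of_apply, mul_comm (x _), eq_comm]

theorem periods_killed_and_primitive_exists_general
    (p N : ℕ) (D : Set (Fin p → ℂ)) (hDo : IsOpen D)
    (Ω : Set ℂ) (hΩo : IsOpen Ω) (hΩc : IsConnected Ω)
    -- the inner boundary components, represented by closed `C¹` cycles in `Ω`
    (γ γ' : Fin N → ℝ → ℂ)
    (hγΩ : ∀ i, ∀ t ∈ Set.Icc (0 : ℝ) 1, γ i t ∈ Ω)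
    (hγd : ∀ i, ∀ t ∈ Set.Icc (0 : ℝ) 1, HasDerivAt (γ i) (γ' i t) t)
    (hγ'c : ∀ i, ContinuousOn (γ' i) (Set.Icc (0 : ℝ) 1))
    -- these cycles detect exactness: a holomorphic function on `Ω` with vanishing
    -- periods around all of them has a primitive on `Ω`
    (hgen : ∀ h : ℂ → ℂ, DifferentiableOn ℂ h Ω →
      (∀ i, (∫ t in (0 : ℝ)..1, h (γ i t) * γ' i t) = 0) →
      ∃ H : ℂ → ℂ, DifferentiableOn ℂ H Ω ∧ ∀ w ∈ Ω, HasDerivAt H (h w) w)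
    -- the Bergman kernel of `Ω`, holomorphic in its first variable
    (K : ℂ → ℂ → ℂ) (hK : ∀ ζ ∈ Ω, DifferentiableOn ℂ (fun z => K z ζ) Ω)
    (ζ : Fin N → ℂ) (hζ : ∀ j, ζ j ∈ Ω)
    -- the period matrix `M_{ij} = ∮_{γ_i} K_Ω(z, ζ_j) dz` is invertible
    (M : Matrix (Fin N) (Fin N) ℂ)
    (hM : M = Matrix.of fun i j => ∫ t in (0 : ℝ)..1, K (γ i t) (ζ j) * γ' i t)
    (hMinv : IsUnit M.det)
    (u : (Fin p → ℂ) × ℂ → ℂ) (hu : DifferentiableOn ℂ u (D ×ˢ Ω)) :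
    ∃ A : Fin N → (Fin p → ℂ) → ℂ,
      (∀ j, DifferentiableOn ℂ (A j) D) ∧
      -- the modified function `v(z', z_n) = u(z', z_n) − Σ_j a_j(z') K_Ω(z_n, ζ_j)`
      -- has vanishing periods around every `γ_i`
      (∀ z' ∈ D, ∀ i,
        (∫ t in (0 : ℝ)..1,
          (u (z', γ i t) - ∑ j, A j z' * K (γ i t) (ζ j)) * γ' i t) = 0) ∧
      -- uniqueness of the functions `a_j` on `D`
      (∀ B : Fin N → (Fin p → ℂ) → ℂ, (∀ j, DifferentiableOn ℂ (B j) D) →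
        (∀ z' ∈ D, ∀ i,
          (∫ t in (0 : ℝ)..1,
            (u (z', γ i t) - ∑ j, B j z' * K (γ i t) (ζ j)) * γ' i t) = 0) →
        ∀ j, ∀ z' ∈ D, B j z' = A j z') ∧
      -- consequently `∂g/∂z_n = v` has a single-valued holomorphic solution on `D × Ω`
      (∃ g : (Fin p → ℂ) × ℂ → ℂ, DifferentiableOn ℂ g (D ×ˢ Ω) ∧
        ∀ z' ∈ D, ∀ w ∈ Ω,
          HasDerivAt (fun ζ' => g (z', ζ'))
            (u (z', w) - ∑ j, A j z' * K w (ζ j)) w) := by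
  have hγc : ∀ i, ContinuousOn (γ i) (Icc 0 1) := fun i => HasDerivAt.continuousOn (hγd i)
  have hKζ : ∀ j, DifferentiableOn ℂ (fun z => K z (ζ j)) Ω := fun j => hK _ (hζ j)
  have hint : ∀ i {f : ℂ → ℂ}, ContinuousOn f Ω →
      IntervalIntegrable (fun t => f (γ i t) * γ' i t) volume 0 1 := fun i f hf =>
    ((hf.comp (hγc i) (hγΩ i)).mul (hγ'c i)).intervalIntegrable_of_Icc zero_le_one
  set c : (Fin p → ℂ) → Fin N → ℂ := fun z' i => ∫ t in (0 : ℝ)..1, u (z', γ i t) * γ' i t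
  have hkill : ∀ z' ∈ D, ∀ a : Fin N → ℂ,
      (∀ i, (∫ t in (0 : ℝ)..1, (u (z', γ i t) - ∑ j, a j * K (γ i t) (ζ j)) * γ' i t) = 0) ↔
        a = M⁻¹ *ᵥ c z' := fun z' hz' =>
    forall_integral_sub_sum_mul_mul_eq_zero_iff (f := fun i t => u (z', γ i t))
      (k := fun i j t => K (γ i t) (ζ j)) (ψ := γ')
      (fun i => hint i (hu.continuousOn.comp (by fun_prop) fun w hw => ⟨hz', hw⟩))
      (fun i j => hint i (hKζ j).continuousOn) hM hMinv
  have hA : ∀ j, DifferentiableOn ℂ (fun z' => (M⁻¹ *ᵥ c z') j) D := fun j =>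
    (DifferentiableOn.fun_sum (u := Finset.univ) fun k _ =>
      (differentiableOn_intervalIntegral_mul hDo hΩo hu (hγc k) (hγΩ k) (hγ'c k)).const_mul
        (M⁻¹ j k) :)
  refine ⟨fun j z' => (M⁻¹ *ᵥ c z') j, hA, fun z' hz' => (hkill z' hz' _).2 rfl,
    fun B _ hB j z' hz' => congrFun ((hkill z' hz' _).1 (hB z' hz')) j, ?_⟩
  have hv : DifferentiableOn ℂ
      (fun q => u q - ∑ j, (M⁻¹ *ᵥ c q.1) j * K q.2 (ζ j)) (D ×ˢ Ω) := by
    refine hu.sub (DifferentiableOn.fun_sum fun j _ => ?_)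
    exact ((hA j).comp differentiableOn_fst fun q hq => hq.1).mul
      ((hKζ j).comp differentiableOn_snd fun q hq => hq.2)
  refine exists_differentiableOn_hasDerivAt_snd hDo hΩo hΩc.isPreconnected hv fun z' hz' => ?_
  obtain ⟨G, -, hG⟩ := hgen (fun w => u (z', w) - ∑ j, (M⁻¹ *ᵥ c z') j * K w (ζ j))
    (hv.comp (by fun_prop) fun w hw => ⟨hz', hw⟩) ((hkill z' hz' _).2 rfl)
  exact ⟨G, hG⟩

/-- Killing the periods of `u` around the inner boundary components of `Ω` by
subtracting `Σ_j a_j(z') K_Ω(z_n, ζ_j)`: if the period matrix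
`M_{ij} = ∮_{γ_i} K_Ω(z, ζ_j) dz` is invertible, there are unique holomorphic
functions `a_j` on `D` so that the modified function `v` has vanishing periods, and
then `∂g/∂z_n = v` admits a single-valued holomorphic solution `g` on `D × Ω`. -/
theorem periods_killed_and_primitive_exists
    (p N : ℕ) (D : Set (Fin p → ℂ)) (hDo : IsOpen D) (hDc : IsConnected D)
    (Ω : Set ℂ) (hΩo : IsOpen Ω) (hΩc : IsConnected Ω) (hΩb : Bornology.IsBounded Ω)
    -- the inner boundary components, represented by closed `C¹` cycles in `Ω`
    (γ γ' : Fin N → ℝ → ℂ)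
    (hγΩ : ∀ i, ∀ t ∈ Set.Icc (0 : ℝ) 1, γ i t ∈ Ω)
    (hγcl : ∀ i, γ i 1 = γ i 0)
    (hγd : ∀ i, ∀ t ∈ Set.Icc (0 : ℝ) 1, HasDerivAt (γ i) (γ' i t) t)
    (hγ'c : ∀ i, ContinuousOn (γ' i) (Set.Icc (0 : ℝ) 1))
    -- these cycles detect exactness: a holomorphic function on `Ω` with vanishing
    -- periods around all of them has a primitive on `Ω`
    (hgen : ∀ h : ℂ → ℂ, DifferentiableOn ℂ h Ω →
      (∀ i, (∫ t in (0 : ℝ)..1, h (γ i t) * γ' i t) = 0) →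
      ∃ H : ℂ → ℂ, DifferentiableOn ℂ H Ω ∧ ∀ w ∈ Ω, HasDerivAt H (h w) w)
    -- the Bergman kernel of `Ω`, holomorphic in its first variable
    (K : ℂ → ℂ → ℂ) (hK : ∀ ζ ∈ Ω, DifferentiableOn ℂ (fun z => K z ζ) Ω)
    (ζ : Fin N → ℂ) (hζ : ∀ j, ζ j ∈ Ω)
    -- the period matrix `M_{ij} = ∮_{γ_i} K_Ω(z, ζ_j) dz` is invertible
    (M : Matrix (Fin N) (Fin N) ℂ)
    (hM : M = Matrix.of fun i j => ∫ t in (0 : ℝ)..1, K (γ i t) (ζ j) * γ' i t)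
    (hMinv : IsUnit M.det)
    (u : (Fin p → ℂ) × ℂ → ℂ) (hu : DifferentiableOn ℂ u (D ×ˢ Ω)) :
    ∃ A : Fin N → (Fin p → ℂ) → ℂ,
      (∀ j, DifferentiableOn ℂ (A j) D) ∧
      -- the modified function `v(z', z_n) = u(z', z_n) − Σ_j a_j(z') K_Ω(z_n, ζ_j)`
      -- has vanishing periods around every `γ_i`
      (∀ z' ∈ D, ∀ i,
        (∫ t in (0 : ℝ)..1,
          (u (z', γ i t) - ∑ j, A j z' * K (γ i t) (ζ j)) * γ' i t) = 0) ∧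
      -- uniqueness of the functions `a_j` on `D`
      (∀ B : Fin N → (Fin p → ℂ) → ℂ, (∀ j, DifferentiableOn ℂ (B j) D) →
        (∀ z' ∈ D, ∀ i,
          (∫ t in (0 : ℝ)..1,
            (u (z', γ i t) - ∑ j, B j z' * K (γ i t) (ζ j)) * γ' i t) = 0) →
        ∀ j, ∀ z' ∈ D, B j z' = A j z') ∧
      -- consequently `∂g/∂z_n = v` has a single-valued holomorphic solution on `D × Ω`
      (∃ g : (Fin p → ℂ) × ℂ → ℂ, DifferentiableOn ℂ g (D ×ˢ Ω) ∧
        ∀ z' ∈ D, ∀ w ∈ Ω,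
          HasDerivAt (fun ζ' => g (z', ζ'))
            (u (z', w) - ∑ j, A j z' * K w (ζ j)) w) :=
  periods_killed_and_primitive_exists_general p N D hDo Ω hΩo hΩc γ γ' hγΩ hγd hγ'c hgen K hK ζ hζ M
    hM hMinv u hu
end
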